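/- Let D be an effective divisor on a nonsingular variety X. The set of jumping numbers of (X,D), i.e. the set of α ∈ ℚ_{>0} where J(αD) changes, is a discrete set of rational numbers; more precisely, with a fixed log resolution μ*D = Σ m_i E_i and discrepancies k_i, every jumping number belongs to the set {(k_i + n)/m_i : i with m_i > 0, n ∈ ℤ_{≥1}}. -/

import Mathlib

open Filter Topology

/- Truncating at `0` hides every jump of `⌊y⌋ - k` except those at `x = k + n`, `n ≥ 1`. -/
theorem eventually_nhdsLT_max_floor_sub_eq {K : Type*} [Ring K] [LinearOrder K]
    [IsStrictOrderedRing K] [FloorRing K] [TopologicalSpace K] [OrderClosedTopology K]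
    {x : K} {k : ℤ} (hx : ∀ n : ℤ, 1 ≤ n → x ≠ k + n) :
    ∀ᶠ y in 𝓝[<] x, max (⌊y⌋ - k) 0 = max (⌊x⌋ - k) 0 := by
  by_cases hfloor : ⌊x⌋ ≤ k
  · filter_upwards [self_mem_nhdsWithin] with y hy
    have : ⌊y⌋ ≤ ⌊x⌋ := Int.floor_le_floor (le_of_lt hy)
    rw [max_eq_right (by omega), max_eq_right (by omega)]
  · have hnotint : x ∉ Set.range ((↑) : ℤ → K) := by
      rintro ⟨n, rfl⟩
      exact hx (n - k) (by simp at hfloor; omega) (by push_cast; abel)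
    have hceil : ⌈x⌉ - 1 = ⌊x⌋ := by
      rw [(Int.ceil_eq_floor_add_one_iff_notMem x).2 hnotint]; ring
    filter_upwards [tendsto_pure.1 (tendsto_floor_left_pure_ceil_sub_one x)] with y hy
    rw [hy, hceil]

theorem eventually_nhdsGT_zero_max_floor_mul_sub_eq {K : Type*} [Field K] [LinearOrder K]
    [IsStrictOrderedRing K] [FloorRing K] [TopologicalSpace K] [OrderTopology K]
    {α : K} {m : ℕ} {k : ℤ} (hα : 0 < m → ∀ n : ℤ, 1 ≤ n → α ≠ (k + n) / m) :
    ∀ᶠ ε in 𝓝[>] 0, max (⌊(α - ε) * m⌋ - k) 0 = max (⌊α * m⌋ - k) 0 := by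
  rcases Nat.eq_zero_or_pos m with rfl | hm
  · simp
  have hmK : (0 : K) < m := by exact_mod_cast hm
  have hx : ∀ n : ℤ, 1 ≤ n → α * m ≠ k + n := fun n hn h =>
    hα hm n hn (by rw [eq_div_iff hmK.ne', h])
  have hlim : Tendsto (fun ε => (α - ε) * m) (𝓝[>] 0) (𝓝[<] (α * m)) := by
    refine tendsto_nhdsWithin_of_tendsto_nhds_of_eventually_within _ ?_ ?_
    · have : Continuous fun ε : K => (α - ε) * m := by fun_prop
      simpa using (this.tendsto 0).mono_left nhdsWithin_le_nhds
    · filter_upwards [self_mem_nhdsWithin] with ε (hε : 0 < ε)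
      show (α - ε) * m < α * m
      nlinarith
  exact hlim.eventually (eventually_nhdsLT_max_floor_sub_eq hx)

theorem stmt_16_general (ι : Type) [Fintype ι] (R : Type) [CommRing R]
    (m : ι → ℕ) (k : ι → ℤ)
    (Γ : (ι → ℤ) → Ideal R)
    (hΓ : ∀ v w : ι → ℤ, (∀ i, max (v i - k i) 0 = max (w i - k i) 0) → Γ v = Γ w)
    (α : ℚ)
    (hjump : ∀ ε : ℚ, 0 < ε →
      Γ (fun i => ⌊(α - ε) * (m i : ℚ)⌋) ≠ Γ (fun i => ⌊α * (m i : ℚ)⌋)) :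
    ∃ i : ι, 0 < m i ∧ ∃ n : ℤ, 1 ≤ n ∧ α = ((k i : ℚ) + (n : ℚ)) / (m i : ℚ) := by
  by_contra hcand
  push Not at hcand
  have hconst : ∀ᶠ ε in 𝓝[>] (0 : ℚ), ∀ i,
      max (⌊(α - ε) * m i⌋ - k i) 0 = max (⌊α * m i⌋ - k i) 0 :=
    eventually_all.2 fun i => eventually_nhdsGT_zero_max_floor_mul_sub_eq (hcand i)
  obtain ⟨ε, heq, hε⟩ := (hconst.and self_mem_nhdsWithin).exists
  exact hjump ε hε (hΓ _ _ heq)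

theorem stmt_16 (ι : Type) [Fintype ι] (R : Type) [CommRing R]
    (m : ι → ℕ) (k : ι → ℤ) (hk : ∀ i, 0 ≤ k i)
    (Γ : (ι → ℤ) → Ideal R)
    (hΓ : ∀ v w : ι → ℤ, (∀ i, max (v i - k i) 0 = max (w i - k i) 0) → Γ v = Γ w)
    (α : ℚ) (hα : 0 < α)
    (hjump : ∀ ε : ℚ, 0 < ε →
      Γ (fun i => ⌊(α - ε) * (m i : ℚ)⌋) ≠ Γ (fun i => ⌊α * (m i : ℚ)⌋)) :
    ∃ i : ι, 0 < m i ∧ ∃ n : ℤ, 1 ≤ n ∧ α = ((k i : ℚ) + (n : ℚ)) / (m i : ℚ) :=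
  stmt_16_general ι R m k Γ hΓ α hjump
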